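/- Let r₁, r₂ ≥ 1 and let m_{1,2} ≤ ⋯ ≤ m_{r₂,2} and m_{1,1} ≤ ⋯ ≤ m_{r₁,1} ≤ −1 be integers with m_{r₂,2} ≥ r₁. Then the element x_{α₂}(m_{1,2})⋯x_{α₂}(m_{r₂,2})·x_{α₁}(m_{1,1})⋯x_{α₁}(m_{r₁,1}) of U(n̄) is a ℂ-linear combination of elements x_{α₂}(m'_{1,2})⋯x_{α₂}(m'_{r₂,2})·x_{α₁}(m'_{1,1})⋯x_{α₁}(m'_{r₁,1}) with m'_{1,2} ≤ ⋯ ≤ m'_{r₂,2} ≤ r₁ − 1, m'_{1,1} ≤ ⋯ ≤ m'_{r₁,1} ≤ −2 and with the same total index sum, plus an element of the left ideal U(n̄)n̄⁺, plus an element of the left ideal U(n̄)·x_{α₁}(−1) (the left ideal generated by x_{α₁}(−1)). -/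

import Mathlib

open scoped TensorProduct

noncomputable section

/-- 3×3 complex matrices 𝔤𝔩(3,ℂ), with the commutator Lie bracket. -/
abbrev Mat3 : Type := Matrix (Fin 3) (Fin 3) ℂ

attribute [instance] LieRing.ofAssociativeRing

lemma upperTri_mul {a b : Mat3} (ha : ∀ i j : Fin 3, j ≤ i → a i j = 0)
    (hb : ∀ i j : Fin 3, j ≤ i → b i j = 0) :
    ∀ i j : Fin 3, j ≤ i → (a * b) i j = 0 := by
  intro i j hij
  rw [Matrix.mul_apply]
  refine Finset.sum_eq_zero fun k _ => ?_
  by_cases hk : k ≤ i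
  · rw [ha i k hk, zero_mul]
  · rw [hb k j (hij.trans (not_le.mp hk).le), mul_zero]

/-- The Lie algebra 𝔫 of strictly upper triangular 3×3 complex matrices. -/
def strictUpper : LieSubalgebra ℂ Mat3 where
  carrier := {M : Mat3 | ∀ i j : Fin 3, j ≤ i → M i j = 0}
  add_mem' := fun {a b} ha hb i j hij => by
    simp only [Matrix.add_apply, ha i j hij, hb i j hij, add_zero]
  zero_mem' := fun i j _ => rfl
  smul_mem' := fun c a ha i j hij => by
    simp only [Matrix.smul_apply, ha i j hij, smul_zero]
  lie_mem' := fun {a b} ha hb i j hij => by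
    rw [Ring.lie_def, Matrix.sub_apply, upperTri_mul ha hb i j hij,
      upperTri_mul hb ha i j hij, sub_zero]

/-- x_{α₁} = E₁₂ ∈ 𝔫. -/
def xa1 : strictUpper :=
  ⟨Matrix.single 0 1 1, by
    intro i j hij
    fin_cases i <;> fin_cases j <;> simp_all [Matrix.single, Matrix.of_apply]⟩

/-- x_{α₂} = E₂₃ ∈ 𝔫. -/
def xa2 : strictUpper :=
  ⟨Matrix.single 1 2 1, by
    intro i j hij
    fin_cases i <;> fin_cases j <;> simp_all [Matrix.single, Matrix.of_apply]⟩

/-- x_{α₁+α₂} = E₁₃ ∈ 𝔫. -/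
def xa12 : strictUpper :=
  ⟨Matrix.single 0 2 1, by
    intro i j hij
    fin_cases i <;> fin_cases j <;> simp_all [Matrix.single, Matrix.of_apply]⟩

/-- The loop algebra n̄ = ℂ[t,t⁻¹] ⊗_ℂ 𝔫, with bracket
`[tᵐ ⊗ x, tⁿ ⊗ y] = t^{m+n} ⊗ [x,y]`. -/
abbrev loopN : Type := LaurentPolynomial ℂ ⊗[ℂ] strictUpper

/-- n̄ is a Lie algebra over ℂ (by restriction of scalars from ℂ[t,t⁻¹]). -/
instance : LieAlgebra ℂ loopN where
  lie_smul c x y := by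
    rw [← algebraMap_smul (LaurentPolynomial ℂ) c y,
      ← algebraMap_smul (LaurentPolynomial ℂ) c ⁅x, y⁆]
    exact lie_smul ((algebraMap ℂ (LaurentPolynomial ℂ)) c) x y

/-- The universal enveloping algebra U(n̄) over ℂ. -/
abbrev Uenv : Type := UniversalEnvelopingAlgebra ℂ loopN

/-- x(m) = tᵐ ⊗ x, viewed as an element of U(n̄). -/
def XX (x : strictUpper) (m : ℤ) : Uenv :=
  UniversalEnvelopingAlgebra.ι ℂ (LaurentPolynomial.T m ⊗ₜ[ℂ] x)

/-- The ordered monomial x(m₁)⋯x(m_r) ∈ U(n̄) attached to a single root vector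
`a` and a sequence of integers `m`. -/
def monom {r : ℕ} (a : strictUpper) (m : Fin r → ℤ) : Uenv :=
  (List.ofFn fun i => XX a (m i)).prod

/-- The left ideal U(n̄)n̄⁺ of U(n̄), generated by the x(m) with x ∈ 𝔫, m ≥ 0. -/
def UNplus : Ideal Uenv :=
  Ideal.span {u : Uenv | ∃ (x : strictUpper) (m : ℤ), 0 ≤ m ∧ u = XX x m}

/-- The truncated relation R^{[j]}_{t;m} = Σ_{m₁,m₂ ≤ m, m₁+m₂=t} x_{α_j}(m₁)x_{α_j}(m₂)
(here `a` stands for the root vector x_{α_j}). -/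
def Rtrunc (a : strictUpper) (t m : ℤ) : Uenv :=
  ∑ k ∈ Finset.Icc (t - m) m, XX a k * XX a (t - k)

/-- The two-sided ideal 𝒥 of U(n̄) generated by all R^{[j]}_{t;m}, j ∈ {1,2}. -/
def Jideal : TwoSidedIdeal Uenv :=
  TwoSidedIdeal.span {u : Uenv | ∃ t m : ℤ, u = Rtrunc xa1 t m ∨ u = Rtrunc xa2 t m}

/-- The difference two condition on a sequence m₁, …, m_r. -/
def diffTwo {r : ℕ} (m : Fin r → ℤ) : Prop :=
  ∀ i j : Fin r, (i : ℕ) + 1 = (j : ℕ) → m i + 2 ≤ m j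

/-!
Write `a n`, `b n`, `c n` for `x_{α₁}(n)`, `x_{α₂}(n)`, `x_{α₁+α₂}(n)`: the `a`'s commute, the
`b`'s commute, `c` commutes with both and `[a n, b m] = c (n + m)`. Modulo the left ideal
`U(n̄)n̄⁺ + U(n̄)a(-1)` the monomial vanishes if some `m_{i,1} = -1`, and so does `u c(k) a(F)`
for `k ≥ -1`, because `c k = a(-1) b(k+1) - b(k+1) a(-1)` and `c` can be moved to the right end.

Let all `m_{i,1} ≤ -2` and `r₁ = s + 1`. Moving a factor `b M` with `M > s` to the right end gives
an element of `U(n̄)n̄⁺` minus commutator terms `u c(w) a(F)` with `F` of length `s`. For such a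
term, the alternating sum over `ε ⊆ {1, …, s}` of `(-1)^|ε| u [a(w, F - 𝟙_ε), b |ε|]` collapses:
the terms in which `c` absorbs an entry of `F` cancel in pairs, leaving `u c(w) a(F)` plus terms
`u c(w + |ε|) a(F - 𝟙_ε)` with a larger `c`-index, which are handled by induction. Each
commutator itself is an element of `U(n̄)n̄⁺` minus `u b(|ε|) a(…)` with `|ε| ≤ s`, a monomial with
fewer `b`-indices above `s`. Induction on that number and sorting the indices conclude.
-/

lemma XX_mul_XX (x y : strictUpper) (m n : ℤ) :
    XX x m * XX y n = XX y n * XX x m + XX ⁅x, y⁆ (m + n) := by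
  have h := (UniversalEnvelopingAlgebra.ι ℂ (L := loopN)).map_lie
    (LaurentPolynomial.T m ⊗ₜ[ℂ] x) (LaurentPolynomial.T n ⊗ₜ[ℂ] y)
  rw [LieAlgebra.ExtendScalars.bracket_tmul, Ring.lie_def, ← LaurentPolynomial.T_add] at h
  rw [XX, XX, XX, h, add_sub_cancel]

lemma XX_zero (m : ℤ) : XX 0 m = 0 := by
  rw [XX, TensorProduct.tmul_zero, map_zero]

lemma commute_XX {x y : strictUpper} (h : ⁅x, y⁆ = 0) (m n : ℤ) :
    Commute (XX x m) (XX y n) := by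
  rw [Commute, SemiconjBy, XX_mul_XX, h, XX_zero, add_zero]

lemma lie_xa1_xa2 : ⁅xa1, xa2⁆ = xa12 := by
  ext i j
  fin_cases i <;> fin_cases j <;> simp [xa1, xa2, xa12, Ring.lie_def]

lemma lie_xa1_xa12 : ⁅xa1, xa12⁆ = 0 := by
  ext i j
  fin_cases i <;> fin_cases j <;> simp [xa1, xa12, Ring.lie_def]

lemma lie_xa1_lie_xa1_xa2 : ⁅xa1, ⁅xa1, xa2⁆⁆ = 0 := by
  rw [lie_xa1_xa2, lie_xa1_xa12]

section Monomials

variable (x : strictUpper) {n : ℕ}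

lemma monom_cons (a : ℤ) (N : Fin n → ℤ) : monom x (Fin.cons a N) = XX x a * monom x N := by
  rw [monom, monom, List.ofFn_succ, List.prod_cons]
  rfl

lemma monom_eq_prod_map (N : Fin n → ℤ) : monom x N = ((List.ofFn N).map (XX x)).prod := by
  rw [monom, List.map_ofFn]
  rfl

lemma monom_comp_perm (N : Fin n → ℤ) (σ : Equiv.Perm (Fin n)) : monom x (N ∘ σ) = monom x N := by
  rw [monom_eq_prod_map, monom_eq_prod_map]
  refine ((σ.ofFn_comp_perm N).map (XX x)).prod_eq' ?_
  exact List.pairwise_map.mpr (List.pairwise_of_forall fun a b => commute_XX (lie_self x) a b)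

lemma commute_monom {y : strictUpper} (h : ⁅x, y⁆ = 0) (N : Fin n → ℤ) (k : ℤ) :
    Commute (monom x N) (XX y k) :=
  Commute.list_prod_left _ _ fun _ hz => by
    obtain ⟨i, rfl⟩ := List.mem_ofFn.mp hz
    exact commute_XX h _ _

lemma monom_eq_XX_mul_removeNth (N : Fin (n + 1) → ℤ) (p : Fin (n + 1)) :
    monom x N = XX x (N p) * monom x (p.removeNth N) := by
  rw [← monom_cons, Fin.cons_removeNth_eq_comp_cycleRange_symm, monom_comp_perm]

lemma monom_eq_removeNth_mul_XX (N : Fin (n + 1) → ℤ) (p : Fin (n + 1)) :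
    monom x N = monom x (p.removeNth N) * XX x (N p) := by
  rw [monom_eq_XX_mul_removeNth x N p, (commute_monom x (lie_self x) _ _).eq]

end Monomials

lemma monom_mul_XX_sub_XX_mul_monom {x y : strictUpper} (h : ⁅x, ⁅x, y⁆⁆ = 0) (j : ℤ) :
    ∀ {n : ℕ} (N : Fin (n + 1) → ℤ),
      monom x N * XX y j - XX y j * monom x N =
        ∑ i, XX ⁅x, y⁆ (N i + j) * monom x (i.removeNth N)
  | 0, N => by
    have h1 : monom x (Fin.removeNth 0 N) = 1 := rfl
    rw [monom_eq_XX_mul_removeNth x N 0, Fin.sum_univ_one, h1, mul_one, mul_one, XX_mul_XX,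
      add_sub_cancel_left]
  | n + 1, N => by
    obtain ⟨a, T, rfl⟩ : ∃ a T, N = Fin.cons a T := ⟨_, _, (Fin.cons_self_tail N).symm⟩
    have hsucc : ∀ i : Fin (n + 1),
        XX ⁅x, y⁆ (T i + j) * monom x (i.succ.removeNth (Fin.cons a T : Fin (n + 2) → ℤ)) =
          XX x a * (XX ⁅x, y⁆ (T i + j) * monom x (i.removeNth T)) := fun i => by
      rw [← mul_assoc, (commute_XX h _ _).eq, mul_assoc, ← monom_cons]
      exact congrArg _ (congrArg _ (Fin.cons_comp_succ_succAbove a T i))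
    rw [monom_cons, Fin.sum_univ_succ, Fin.cons_zero, Fin.removeNth_zero, Fin.tail_cons]
    simp only [Fin.cons_succ, hsucc, ← Finset.mul_sum, ← monom_mul_XX_sub_XX_mul_monom h j T]
    rw [← mul_assoc (XX y j), eq_sub_of_add_eq (XX_mul_XX x y a j).symm]
    noncomm_ring

lemma sum_neg_one_pow_card_smul_eq_zero {ι M : Type*} [Fintype ι] [DecidableEq ι]
    [AddCommGroup M] (f : Finset ι → M) (i : ι) (hf : ∀ ε, i ∉ ε → f (insert i ε) = f ε) :
    ∑ ε, (-1 : ℤ) ^ ε.card • f ε = 0 := by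
  rw [← Finset.powerset_univ, ← Finset.insert_erase (Finset.mem_univ i),
    Finset.sum_powerset_insert (Finset.notMem_erase i _), ← Finset.sum_add_distrib]
  refine Finset.sum_eq_zero fun ε hε => ?_
  have hi : i ∉ ε := fun h => Finset.notMem_erase i _ (Finset.mem_powerset.mp hε h)
  rw [Finset.card_insert_of_notMem hi, hf ε hi, pow_succ, mul_neg_one, neg_smul, add_neg_cancel]

section LowerOn

variable {s : ℕ}

def lowerOn (ε : Finset (Fin s)) (F : Fin s → ℤ) (i : Fin s) : ℤ :=
  F i - if i ∈ ε then 1 else 0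

lemma lowerOn_le (ε : Finset (Fin s)) (F : Fin s → ℤ) (i : Fin s) : lowerOn ε F i ≤ F i := by
  unfold lowerOn
  split_ifs <;> omega

lemma lowerOn_empty (F : Fin s → ℤ) : lowerOn ∅ F = F := by
  ext i
  simp [lowerOn]

lemma sum_lowerOn (ε : Finset (Fin s)) (F : Fin s → ℤ) :
    ∑ i, lowerOn ε F i = ∑ i, F i - ε.card := by
  simp [lowerOn, Finset.sum_sub_distrib]

lemma lowerOn_insert {ε : Finset (Fin s)} {i : Fin s} (hi : i ∉ ε) (F : Fin s → ℤ) :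
    lowerOn (insert i ε) F = Function.update (lowerOn ε F) i (lowerOn ε F i - 1) := by
  ext k
  rcases eq_or_ne k i with rfl | hk
  · simp [lowerOn, hi]
  · simp [lowerOn, hk]

end LowerOn

lemma sum_neg_one_pow_smul_monom_mul_XX_sub {x y : strictUpper} (h : ⁅x, ⁅x, y⁆⁆ = 0) {s : ℕ}
    (w : ℤ) (F : Fin s → ℤ) :
    ∑ ε : Finset (Fin s), (-1 : ℤ) ^ ε.card •
        (monom x (Fin.cons w (lowerOn ε F)) * XX y ε.card -
          XX y ε.card * monom x (Fin.cons w (lowerOn ε F))) =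
      ∑ ε : Finset (Fin s), (-1 : ℤ) ^ ε.card •
        (XX ⁅x, y⁆ (w + ε.card) * monom x (lowerOn ε F)) := by
  simp only [monom_mul_XX_sub_XX_mul_monom h, Fin.sum_univ_succ, Fin.cons_zero,
    Fin.removeNth_zero, Fin.tail_cons, Fin.cons_succ, smul_add, Finset.sum_add_distrib,
    Finset.smul_sum]
  rw [Finset.sum_comm, add_eq_left]
  refine Finset.sum_eq_zero fun i _ => sum_neg_one_pow_card_smul_eq_zero _ i fun ε hi => ?_
  rw [lowerOn_insert hi, Fin.cons_update, Fin.removeNth_update, Function.update_self,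
    Finset.card_insert_of_notMem hi]
  congr 2
  push_cast
  ring

def relIdeal : Ideal Uenv := UNplus ⊔ Ideal.span {XX xa1 (-1)}

lemma mul_XX_mem_UNplus (u : Uenv) (x : strictUpper) {m : ℤ} (hm : 0 ≤ m) : u * XX x m ∈ UNplus :=
  Ideal.mul_mem_left _ u (Ideal.subset_span ⟨x, m, hm, rfl⟩)

lemma mul_XX_xa1_neg_one_mem (u : Uenv) : u * XX xa1 (-1) ∈ Ideal.span {XX xa1 (-1)} :=
  Ideal.mul_mem_left _ u (Ideal.mem_span_singleton_self _)

lemma mul_XX_xa12_mem_relIdeal (u : Uenv) {k : ℤ} (hk : -1 ≤ k) : u * XX xa12 k ∈ relIdeal := by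
  have hc : XX xa12 k = XX xa1 (-1) * XX xa2 (k + 1) - XX xa2 (k + 1) * XX xa1 (-1) := by
    rw [XX_mul_XX, lie_xa1_xa2, add_sub_cancel_left, neg_add_cancel_comm_assoc]
  rw [hc, mul_sub, ← mul_assoc, ← mul_assoc]
  exact sub_mem (Ideal.mem_sup_left (mul_XX_mem_UNplus _ _ (by omega)))
    (Ideal.mem_sup_right (mul_XX_xa1_neg_one_mem _))

lemma mul_XX_xa12_mul_monom_mem_relIdeal (u : Uenv) {k : ℤ} (hk : -1 ≤ k) {n : ℕ}
    (F : Fin n → ℤ) : u * XX xa12 k * monom xa1 F ∈ relIdeal := by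
  rw [mul_assoc, ← (commute_monom xa1 lie_xa1_xa12 F k).eq, ← mul_assoc]
  exact mul_XX_xa12_mem_relIdeal _ hk

lemma mul_XX_xa12_mul_monom_mem_of_XX_xa2 {s : ℕ} {G : Submodule ℂ Uenv}
    (hG : relIdeal.restrictScalars ℂ ≤ G) (u : Uenv) (σ : ℤ)
    (hb : ∀ j : ℕ, j ≤ s → ∀ S : Fin (s + 1) → ℤ, (∀ i, S i ≤ -2) → j + ∑ i, S i = σ →
      u * XX xa2 j * monom xa1 S ∈ G)
    (w : ℤ) (hw : w ≤ -2) (F : Fin s → ℤ) (hF : ∀ i, F i ≤ -2) (hsum : w + ∑ i, F i = σ) :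
    u * XX xa12 w * monom xa1 F ∈ G := by
  induction hd : (-2 - w).toNat using Nat.strong_induction_on generalizing w F with
  | _ d IH =>
  set term : Finset (Fin s) → Uenv := fun ε =>
    (-1 : ℤ) ^ ε.card • (u * XX xa12 (w + ε.card) * monom xa1 (lowerOn ε F)) with hterm
  have hall : ∑ ε, term ε ∈ G := by
    have hid := sum_neg_one_pow_smul_monom_mul_XX_sub lie_xa1_lie_xa1_xa2 w F
    rw [lie_xa1_xa2] at hid
    have hterms : ∑ ε, term ε = u * ∑ ε : Finset (Fin s), (-1 : ℤ) ^ ε.card •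
        (XX xa12 (w + ε.card) * monom xa1 (lowerOn ε F)) := by
      rw [Finset.mul_sum]
      exact Finset.sum_congr rfl fun ε _ => by rw [mul_smul_comm, ← mul_assoc]
    rw [hterms, ← hid, Finset.mul_sum]
    refine Submodule.sum_mem G fun ε _ => ?_
    rw [mul_smul_comm, mul_sub, ← mul_assoc, ← mul_assoc]
    refine zsmul_mem (sub_mem ?_ ?_) _
    · exact hG (Ideal.mem_sup_left (mul_XX_mem_UNplus _ _ (by positivity)))
    · refine hb ε.card (by simpa using ε.card_le_univ) _
        (Fin.cases hw fun i => (lowerOn_le ε F i).trans (hF i)) ?_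
      rw [Fin.sum_cons, sum_lowerOn]
      omega
  have hnonempty : ∀ ε ∈ Finset.univ.erase ∅, term ε ∈ G := by
    intro ε hε
    have hcard : 1 ≤ ε.card :=
      Finset.card_pos.mpr (Finset.nonempty_iff_ne_empty.mpr (Finset.ne_of_mem_erase hε))
    refine zsmul_mem ?_ _
    rcases le_or_gt (-1) (w + ε.card) with hk | hk
    · exact hG (mul_XX_xa12_mul_monom_mem_relIdeal u hk _)
    · exact IH _ (by omega) _ (by omega) _ (fun i => (lowerOn_le ε F i).trans (hF i))
        (by rw [sum_lowerOn]; omega) rfl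
  have hempty : term ∅ = u * XX xa12 w * monom xa1 F := by
    simp [hterm, lowerOn_empty]
  rw [← Finset.add_sum_erase _ _ (Finset.mem_univ ∅), hempty] at hall
  simpa using sub_mem hall (Submodule.sum_mem G hnonempty)

def sortedMonomials (r1 r2 : ℕ) (σ : ℤ) : Set Uenv :=
  {u | ∃ (m2' : Fin r2 → ℤ) (m1' : Fin r1 → ℤ),
    Monotone m2' ∧ Monotone m1' ∧
    (∀ i, m2' i ≤ (r1 : ℤ) - 1) ∧ (∀ i, m1' i ≤ -2) ∧
    ((∑ i, m2' i) + ∑ i, m1' i = σ) ∧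
    u = monom xa2 m2' * monom xa1 m1'}

lemma monom_mul_monom_mem_sortedMonomials {r1 r2 : ℕ} {B : Fin r2 → ℤ} {A : Fin r1 → ℤ}
    (hB : ∀ i, B i ≤ (r1 : ℤ) - 1) (hA : ∀ i, A i ≤ -2) :
    monom xa2 B * monom xa1 A ∈ sortedMonomials r1 r2 ((∑ i, B i) + ∑ i, A i) :=
  ⟨B ∘ Tuple.sort B, A ∘ Tuple.sort A, Tuple.monotone_sort B, Tuple.monotone_sort A,
    fun _ => hB _, fun _ => hA _,
    by rw [Function.comp_def, Function.comp_def, Equiv.sum_comp, Equiv.sum_comp],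
    by rw [monom_comp_perm, monom_comp_perm]⟩

lemma monom_mul_monom_mem_span_sup_relIdeal {s r2 : ℕ} (σ : ℤ) (B : Fin r2 → ℤ)
    (A : Fin (s + 1) → ℤ) (hA : ∀ i, A i ≤ -2) (hσ : (∑ i, B i) + ∑ i, A i = σ) :
    monom xa2 B * monom xa1 A ∈
      Submodule.span ℂ (sortedMonomials (s + 1) r2 σ) ⊔ relIdeal.restrictScalars ℂ := by
  set G := Submodule.span ℂ (sortedMonomials (s + 1) r2 σ) ⊔ relIdeal.restrictScalars ℂ
  have hG : relIdeal.restrictScalars ℂ ≤ G := le_sup_right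
  induction hc : (Finset.univ.filter fun i => (s : ℤ) < B i).card using Nat.strong_induction_on
    generalizing B A with
  | _ c IH =>
  by_cases hbad : ∃ p, (s : ℤ) < B p
  swap
  · simp only [not_exists, not_lt] at hbad
    refine Submodule.mem_sup_left (Submodule.subset_span ?_)
    rw [← hσ]
    exact monom_mul_monom_mem_sortedMonomials (fun i => by have := hbad i; omega) hA
  obtain ⟨p, hp⟩ := hbad
  obtain ⟨k, rfl⟩ : ∃ k, r2 = k + 1 := Nat.exists_eq_succ_of_ne_zero p.pos.ne'
  set v := monom xa2 (p.removeNth B)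
  have hcomm := monom_mul_XX_sub_XX_mul_monom lie_xa1_lie_xa1_xa2 (B p) A
  rw [lie_xa1_xa2] at hcomm
  have hexpand : monom xa2 B * monom xa1 A = v * monom xa1 A * XX xa2 (B p) -
      ∑ i, v * XX xa12 (A i + B p) * monom xa1 (i.removeNth A) := by
    simp only [mul_assoc, ← Finset.mul_sum, ← hcomm, monom_eq_removeNth_mul_XX xa2 B p, v]
    noncomm_ring
  rw [hexpand]
  refine sub_mem (hG (Ideal.mem_sup_left (mul_XX_mem_UNplus _ _ (by omega))))
    (Submodule.sum_mem G fun i _ => ?_)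
  rcases le_or_gt (-1) (A i + B p) with hk | hk
  · exact hG (mul_XX_xa12_mul_monom_mem_relIdeal v hk _)
  refine mul_XX_xa12_mul_monom_mem_of_XX_xa2 hG v (σ - ∑ j, p.removeNth B j)
    (fun j hj S hS hjS => ?_) _ (by omega) _ (fun _ => hA _)
    (by rw [← Fin.add_sum_removeNth i A, ← Fin.add_sum_removeNth p B] at hσ; omega)
  have hupdate : v * XX xa2 j * monom xa1 S = monom xa2 (Function.update B p j) * monom xa1 S := by
    rw [monom_eq_removeNth_mul_XX xa2 (Function.update B p j) p, Fin.removeNth_update,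
      Function.update_self]
  rw [hupdate]
  refine IH _ ?_ _ S hS ?_ rfl
  · rw [← hc]
    refine Finset.card_lt_card ((Finset.ssubset_iff_of_subset fun i => ?_).mpr
      ⟨p, by simpa using hp, by simpa using hj⟩)
    rcases eq_or_ne i p with rfl | hi
    · simp only [Finset.mem_filter, Function.update_self]
      omega
    · simp [hi]
  · rw [← Fin.add_sum_removeNth p, Fin.removeNth_update, Function.update_self]
    omega

/-- Lemma 3.5(1) of the paper: for `r₁, r₂ ≥ 1`, `m_{1,2} ≤ ⋯ ≤ m_{r₂,2}` with
`m_{r₂,2} ≥ r₁` and `m_{1,1} ≤ ⋯ ≤ m_{r₁,1} ≤ −1`, the monomial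
`x_{α₂}(m_{1,2})⋯x_{α₂}(m_{r₂,2})x_{α₁}(m_{1,1})⋯x_{α₁}(m_{r₁,1})` is a ℂ-linear
combination of such monomials with `m'_{r₂,2} ≤ r₁ − 1`, `m'_{r₁,1} ≤ −2` and the
same total index sum, plus an element of U(n̄)n̄⁺, plus an element of the left
ideal U(n̄)·x_{α₁}(−1). -/
theorem statement4 (r1 r2 : ℕ) (hr1 : 1 ≤ r1)
    (m2 : Fin r2 → ℤ) (m1 : Fin r1 → ℤ)
    (hm1neg : ∀ i, m1 i ≤ -1) :
    ∃ v ∈ Submodule.span ℂ {u : Uenv |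
        ∃ (m2' : Fin r2 → ℤ) (m1' : Fin r1 → ℤ),
          Monotone m2' ∧ Monotone m1' ∧
          (∀ i, m2' i ≤ (r1 : ℤ) - 1) ∧ (∀ i, m1' i ≤ -2) ∧
          ((∑ i, m2' i) + ∑ i, m1' i = (∑ i, m2 i) + ∑ i, m1 i) ∧
          u = monom xa2 m2' * monom xa1 m1'},
      ∃ w ∈ UNplus, ∃ z ∈ Ideal.span {XX xa1 (-1)},
        monom xa2 m2 * monom xa1 m1 = v + w + z := by
  obtain ⟨s, rfl⟩ : ∃ s, r1 = s + 1 := ⟨r1 - 1, by omega⟩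
  by_cases hA : ∀ i, m1 i ≤ -2
  · obtain ⟨v, hv, y, hy, hvy⟩ :=
      Submodule.mem_sup.mp (monom_mul_monom_mem_span_sup_relIdeal _ m2 m1 hA rfl)
    obtain ⟨w, hw, z, hz, hwz⟩ := Submodule.mem_sup.mp hy
    exact ⟨v, hv, w, hw, z, hz, by rw [← hvy, ← hwz, add_assoc]⟩
  · obtain ⟨p, hp⟩ : ∃ p, m1 p = -1 := by
      obtain ⟨p, hp⟩ := not_forall.mp hA
      exact ⟨p, by have := hm1neg p; omega⟩
    refine ⟨0, zero_mem _, 0, zero_mem _, _, ?_, by rw [zero_add, zero_add]⟩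
    rw [monom_eq_removeNth_mul_XX xa1 m1 p, hp, ← mul_assoc]
    exact mul_XX_xa1_neg_one_mem _

end
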